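/- arXiv:2011.14958 — 5 statements merged into one kernel-verified Lean document; each statement's English description precedes it below -/
import Mathlib

section
/- Let n ≥ 1, let q* ∈ ℝⁿ, and let V, V_d : ℝⁿ → ℝ be twice continuously differentiable. Let M, M_d : ℝⁿ → Mat_{n×n}(ℝ) be continuous maps taking values in the symmetric positive definite matrices, and let ℓ : ℝⁿ → ℝⁿ be continuous with ℓ(q*) ≠ 0, such that the map q ↦ M(q)⁻¹ M_d(q) ℓ(q) is differentiable at q*. Assume: (i) the matching equation ℓ(q)ᵀ ∇V(q) = ℓ(q)ᵀ M_d(q) M(q)⁻¹ ∇V_d(q) holds for all q ∈ ℝⁿ; (ii) ∇V_d(q*) = 0; (iii) the Hessian matrix of V_d at q* is positive definite. Then, writing h(q) = ℓ(q)ᵀ ∇V(q) (which is differentiable at q*), the number ℓ(q*)ᵀ M_d(q*) M(q*)⁻¹ ∇h(q*) is strictly positive. -/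
open Matrix

/-- Euclidean gradient of a scalar function on `ℝⁿ`. -/
noncomputable def grad {n : ℕ} (f : (Fin n → ℝ) → ℝ) (q : Fin n → ℝ) : Fin n → ℝ :=
  fun i => fderiv ℝ f q (Pi.single i 1)

/-- Hessian matrix of a scalar function on `ℝⁿ`. -/
noncomputable def hess {n : ℕ} (f : (Fin n → ℝ) → ℝ) (q : Fin n → ℝ) :
    Matrix (Fin n) (Fin n) ℝ :=
  fun i j => fderiv ℝ (fun x => fderiv ℝ f x (Pi.single j 1)) q (Pi.single i 1)

/-!
Put `w = M⁻¹ M_d ℓ`. As `M` and `M_d` are symmetric, `ℓᵀ M_d M⁻¹ x = wᵀ x`, so the matching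
equation reads `h = wᵀ ∇V_d`. Because `∇V_d(q*) = 0`, the product rule gives
`∇h(q*) = Hess V_d(q*) w(q*)`, and the quantity in question is `w(q*)ᵀ Hess V_d(q*) w(q*) > 0`,
where `w(q*) ≠ 0` since `M⁻¹ M_d` is invertible and `ℓ(q*) ≠ 0`.
-/

namespace Matrix

variable {ι K : Type*} [Fintype ι] [DecidableEq ι]

theorem dotProduct_mul_inv_mulVec [CommRing K] {A B : Matrix ι ι K} (hA : A.IsSymm)
    (hB : B.IsSymm) (v x : ι → K) :
    v ⬝ᵥ ((B * A⁻¹) *ᵥ x) = (A⁻¹ *ᵥ (B *ᵥ v)) ⬝ᵥ x := by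
  rw [dotProduct_mulVec, ← mulVec_transpose, transpose_mul, transpose_nonsing_inv, hA.eq, hB.eq,
    mulVec_mulVec]

theorem mulVec_ne_zero_of_isUnit [Field K] {A : Matrix ι ι K} (hA : IsUnit A) {v : ι → K}
    (hv : v ≠ 0) : A *ᵥ v ≠ 0 := by
  simpa only [mulVec_zero] using (mulVec_injective_of_isUnit hA).ne hv

end Matrix

theorem hasFDerivAt_dotProduct_of_right_eq_zero {E ι : Type*} [NormedAddCommGroup E]
    [NormedSpace ℝ E] [Fintype ι] {w g : E → ι → ℝ} {g' : ι → E →L[ℝ] ℝ} {x : E}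
    (hw : DifferentiableAt ℝ w x) (hg : ∀ i, HasFDerivAt (fun q => g q i) (g' i) x)
    (hg0 : g x = 0) :
    HasFDerivAt (fun q => w q ⬝ᵥ g q) (∑ i, w x i • g' i) x := by
  refine HasFDerivAt.fun_sum fun i _ => ?_
  simpa [hg0] using (differentiableAt_pi.1 hw i).hasFDerivAt.fun_mul (hg i)

section Gradient

variable {n : ℕ} {f : (Fin n → ℝ) → ℝ} {w : (Fin n → ℝ) → Fin n → ℝ} {q : Fin n → ℝ}

theorem ContDiff.differentiable_grad_apply (hf : ContDiff ℝ 2 f) (i : Fin n) :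
    Differentiable ℝ (fun x => grad f x i) :=
  ((hf.fderiv_right (by norm_num)).differentiable one_ne_zero).clm_apply (differentiable_const _)

theorem grad_dotProduct_grad_of_grad_eq_zero (hw : DifferentiableAt ℝ w q)
    (hf : ∀ i, DifferentiableAt ℝ (fun x => grad f x i) q) (hq : grad f q = 0) :
    grad (fun x => w x ⬝ᵥ grad f x) q = hess f q *ᵥ w q := by
  ext j
  rw [grad, (hasFDerivAt_dotProduct_of_right_eq_zero hw (fun i => (hf i).hasFDerivAt) hq).fderiv,
    mulVec, dotProduct_comm, dotProduct]
  simp only [_root_.sum_apply, _root_.smul_apply, smul_eq_mul]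
  rfl

end Gradient

theorem necessary_condition_IDA_PBC_general {n : ℕ} (qs : Fin n → ℝ)
    (V Vd : (Fin n → ℝ) → ℝ) (hVd : ContDiff ℝ 2 Vd)
    (M Md : (Fin n → ℝ) → Matrix (Fin n) (Fin n) ℝ)
    (hMpd : ∀ q, (M q).PosDef) (hMdpd : ∀ q, (Md q).PosDef)
    (ℓ : (Fin n → ℝ) → (Fin n → ℝ)) (hℓ0 : ℓ qs ≠ 0)
    (hdiff : DifferentiableAt ℝ (fun q => (M q)⁻¹ *ᵥ (Md q *ᵥ ℓ q)) qs)
    (hmatch : ∀ q, ℓ q ⬝ᵥ grad V q = ℓ q ⬝ᵥ ((Md q * (M q)⁻¹) *ᵥ grad Vd q))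
    (hcrit : grad Vd qs = 0)
    (hhess : (hess Vd qs).PosDef) :
    DifferentiableAt ℝ (fun q => ℓ q ⬝ᵥ grad V q) qs ∧
    0 < ℓ qs ⬝ᵥ ((Md qs * (M qs)⁻¹) *ᵥ grad (fun q => ℓ q ⬝ᵥ grad V q) qs) := by
  set w := fun q => (M q)⁻¹ *ᵥ (Md q *ᵥ ℓ q)
  have hpair q x : ℓ q ⬝ᵥ ((Md q * (M q)⁻¹) *ᵥ x) = w q ⬝ᵥ x :=
    dotProduct_mul_inv_mulVec (isHermitian_iff_isSymm.1 (hMpd q).isHermitian)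
      (isHermitian_iff_isSymm.1 (hMdpd q).isHermitian) _ _
  have hh : (fun q => ℓ q ⬝ᵥ grad V q) = fun q => w q ⬝ᵥ grad Vd q :=
    funext fun q => (hmatch q).trans (hpair q _)
  have hgrad i := (hVd.differentiable_grad_apply i).differentiableAt (x := qs)
  have hderiv :=
    hasFDerivAt_dotProduct_of_right_eq_zero hdiff (fun i => (hgrad i).hasFDerivAt) hcrit
  have hw0 : w qs ≠ 0 :=
    mulVec_ne_zero_of_isUnit (isUnit_nonsing_inv_iff.2 (hMpd qs).isUnit)
      (mulVec_ne_zero_of_isUnit (hMdpd qs).isUnit hℓ0)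
  rw [hh, hpair, grad_dotProduct_grad_of_grad_eq_zero hdiff hgrad hcrit]
  exact ⟨hderiv.differentiableAt, by simpa using hhess.dotProduct_mulVec_pos hw0⟩

/-- Proposition 1: necessary condition for kinetic-energy shaping in IDA-PBC. -/
theorem necessary_condition_IDA_PBC {n : ℕ} (hn : 1 ≤ n) (qs : Fin n → ℝ)
    (V Vd : (Fin n → ℝ) → ℝ) (hV : ContDiff ℝ 2 V) (hVd : ContDiff ℝ 2 Vd)
    (M Md : (Fin n → ℝ) → Matrix (Fin n) (Fin n) ℝ)
    (hMc : Continuous M) (hMdc : Continuous Md)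
    (hMpd : ∀ q, (M q).PosDef) (hMdpd : ∀ q, (Md q).PosDef)
    (ℓ : (Fin n → ℝ) → (Fin n → ℝ)) (hℓc : Continuous ℓ) (hℓ0 : ℓ qs ≠ 0)
    (hdiff : DifferentiableAt ℝ (fun q => (M q)⁻¹ *ᵥ (Md q *ᵥ ℓ q)) qs)
    (hmatch : ∀ q, ℓ q ⬝ᵥ grad V q = ℓ q ⬝ᵥ ((Md q * (M q)⁻¹) *ᵥ grad Vd q))
    (hcrit : grad Vd qs = 0)
    (hhess : (hess Vd qs).PosDef) :
    DifferentiableAt ℝ (fun q => ℓ q ⬝ᵥ grad V q) qs ∧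
    0 < ℓ qs ⬝ᵥ ((Md qs * (M qs)⁻¹) *ᵥ grad (fun q => ℓ q ⬝ᵥ grad V q) qs) :=
  necessary_condition_IDA_PBC_general qs V Vd hVd M Md hMpd hMdpd ℓ hℓ0 hdiff hmatch hcrit hhess
end

section
/- Let n ≥ 2, m = n − 1, and fix q, p ∈ ℝⁿ. Let M, M_d : ℝⁿ → Mat_{n×n}(ℝ) be differentiable maps taking symmetric positive definite values, let V, V_d : ℝⁿ → ℝ be differentiable, and define H(q,p) = ½ pᵀM(q)⁻¹p + V(q) and H_d(q,p) = ½ pᵀM_d(q)⁻¹p + V_d(q). Let G(q) be an n×m matrix of rank m, let w ∈ ℝⁿ be nonzero with G(q)ᵀw = 0, let J₂ be any real n×n matrix, and let K_v be any real m×m matrix. Suppose the matching condition wᵀ( ∇_q H(q,p) − M_d(q)M(q)⁻¹ ∇_q H_d(q,p) + J₂ M_d(q)⁻¹ p ) = 0 holds. Define u = u_es + u_di with u_es = (GᵀG)⁻¹Gᵀ( ∇_q H − M_d M⁻¹ ∇_q H_d + J₂ M_d⁻¹ p ) and u_di = −K_v Gᵀ ∇_p H_d, all evaluated at (q,p). Then: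 (a) ∇_p H(q,p) = M(q)⁻¹M_d(q) ∇_p H_d(q,p), and (b) −∇_q H(q,p) + G(q) u = −M_d(q)M(q)⁻¹ ∇_q H_d(q,p) + ( J₂ − G(q) K_v G(q)ᵀ ) ∇_p H_d(q,p). -/
/-!
Both kinetic energies are quadratic forms with symmetric invertible matrices, so
`∇_p H = M⁻¹ p` and `∇_p H_d = M_d⁻¹ p`, which gives (a). For (b), the vector
`s = ∇_q H − M_d M⁻¹ ∇_q H_d + J₂ M_d⁻¹ p` is orthogonal to `w` by the matching condition.
Since `G` has rank `n − 1` and `w ≠ 0` annihilates it, the column space of `G` is exactly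
`w^⊥`, so `s = G t` for some `t`; as `GᵀG` is invertible, `G u_es = G (GᵀG)⁻¹ Gᵀ s = s`,
and the closed-loop identity is then a rearrangement.
-/

open Matrix

theorem grad_half_dotProduct_mulVec_add_const {n : ℕ} {A : Matrix (Fin n) (Fin n) ℝ}
    (hA : A.IsSymm) (c : ℝ) (p : Fin n → ℝ) :
    grad (fun y => (1 / 2 : ℝ) * (y ⬝ᵥ (A *ᵥ y)) + c) p = A *ᵥ p := by
  let B : (Fin n → ℝ) →L[ℝ] (Fin n → ℝ) →L[ℝ] ℝ :=
    (Matrix.toLinearMap₂' ℝ A).toContinuousBilinearMap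
  -- `y ⬝ᵥ A *ᵥ y = B y y`, so the product rule for bilinear maps gives `v ↦ B p v + B v p`.
  have hQ : HasFDerivAt (fun y => y ⬝ᵥ (A *ᵥ y))
      (B.precompR _ p (.id ℝ _) + B.precompL _ (.id ℝ _) p) p := by
    simpa [B, Matrix.toLinearMap₂'_apply'] using
      B.hasFDerivAt_of_bilinear (hasFDerivAt_id p) (hasFDerivAt_id p)
  funext i
  rw [grad, ((hQ.const_mul (1 / 2 : ℝ)).add_const c).fderiv]
  have hsymm : p ⬝ᵥ A.col i = (A *ᵥ p) i := by
    rw [← mulVec_single_one, dotProduct_mulVec, ← mulVec_transpose, hA.eq,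
      dotProduct_single_one]
  simp only [B, _root_.add_apply, _root_.smul_apply,
    ContinuousLinearMap.precompR_apply, ContinuousLinearMap.precompL_apply,
    ContinuousLinearMap.compL_apply, ContinuousLinearMap.comp_id, ContinuousLinearMap.id_apply,
    LinearMap.toContinuousBilinearMap_apply, toLinearMap₂'_apply', mulVec_single,
    MulOpposite.op_one, one_smul, hsymm, single_dotProduct, one_mul, smul_eq_mul]
  ring

namespace Matrix

variable {K ι κ : Type*} [Field K] [Fintype ι] [Fintype κ]

theorem isUnit_of_rank_eq_card [DecidableEq κ] {A : Matrix κ κ K}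
    (hA : A.rank = Fintype.card κ) : IsUnit A := by
  refine mulVec_surjective_iff_isUnit.mp ((LinearMap.range_eq_top (f := A.mulVecLin)).mp ?_)
  exact Submodule.eq_top_of_finrank_eq (by rw [Module.finrank_fintype_fun_eq_card]; exact hA)

theorem isUnit_transpose_mul_self_of_rank_eq_card [LinearOrder K] [IsStrictOrderedRing K]
    [DecidableEq κ] {G : Matrix ι κ K} (hG : G.rank = Fintype.card κ) : IsUnit (Gᵀ * G) :=
  isUnit_of_rank_eq_card ((rank_transpose_mul_self G).trans hG)

theorem mulVec_inv_transpose_mul_self_mulVec_transpose_of_mem_range [DecidableEq κ]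
    {G : Matrix ι κ K} (hG : IsUnit (Gᵀ * G)) {s : ι → K}
    (hs : s ∈ LinearMap.range G.mulVecLin) : G *ᵥ ((Gᵀ * G)⁻¹ *ᵥ (Gᵀ *ᵥ s)) = s := by
  obtain ⟨t, rfl⟩ := hs
  simp only [mulVecLin_apply, mulVec_mulVec]
  rw [nonsing_inv_mul _ ((isUnit_iff_isUnit_det _).mp hG), Matrix.mul_one]

theorem range_mulVecLin_eq_ker_dotProduct {G : Matrix ι κ K} {w : ι → K} (hw : w ≠ 0)
    (hGw : Gᵀ *ᵥ w = 0) (hG : G.rank + 1 = Fintype.card ι) :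
    LinearMap.range G.mulVecLin = LinearMap.ker (dotProductBilin K K w) := by
  have hf : dotProductBilin K K w ≠ 0 := by
    classical
    obtain ⟨i, hi⟩ := Function.ne_iff.mp hw
    exact fun h => hi (by simpa using LinearMap.congr_fun h (Pi.single i 1))
  apply Submodule.eq_of_le_of_finrank_eq
  · rintro _ ⟨t, rfl⟩
    rw [LinearMap.mem_ker, dotProductBilin_apply_apply, mulVecLin_apply, dotProduct_mulVec,
      ← mulVec_transpose, hGw, zero_dotProduct]
  · have := Module.Dual.finrank_ker_add_one_of_ne_zero hf
    rw [Module.finrank_fintype_fun_eq_card] at this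
    exact Nat.add_right_cancel (hG.trans this.symm)

end Matrix

theorem IDA_PBC_closed_loop_general {n m : ℕ} (hm : m = n - 1)
    (q p : Fin n → ℝ)
    (M Md : (Fin n → ℝ) → Matrix (Fin n) (Fin n) ℝ)
    (hMpd : ∀ x, (M x).PosDef) (hMdpd : ∀ x, (Md x).PosDef)
    (V Vd : (Fin n → ℝ) → ℝ)
    (H Hd : (Fin n → ℝ) → (Fin n → ℝ) → ℝ)
    (hH : H = fun x y => (1 / 2 : ℝ) * (y ⬝ᵥ ((M x)⁻¹ *ᵥ y)) + V x)
    (hHd : Hd = fun x y => (1 / 2 : ℝ) * (y ⬝ᵥ ((Md x)⁻¹ *ᵥ y)) + Vd x)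
    (G : Matrix (Fin n) (Fin m) ℝ) (hG : G.rank = m)
    (w : Fin n → ℝ) (hw : w ≠ 0) (hannih : Gᵀ *ᵥ w = 0)
    (J₂ : Matrix (Fin n) (Fin n) ℝ) (Kv : Matrix (Fin m) (Fin m) ℝ)
    (hmatch : w ⬝ᵥ (grad (fun x => H x p) q
        - (Md q * (M q)⁻¹) *ᵥ grad (fun x => Hd x p) q
        + J₂ *ᵥ ((Md q)⁻¹ *ᵥ p)) = 0)
    (u_es u_di u : Fin m → ℝ)
    (hu_es : u_es = (Gᵀ * G)⁻¹ *ᵥ (Gᵀ *ᵥ (grad (fun x => H x p) q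
        - (Md q * (M q)⁻¹) *ᵥ grad (fun x => Hd x p) q
        + J₂ *ᵥ ((Md q)⁻¹ *ᵥ p))))
    (hu_di : u_di = -(Kv *ᵥ (Gᵀ *ᵥ grad (fun y => Hd q y) p)))
    (hu : u = u_es + u_di) :
    grad (fun y => H q y) p = ((M q)⁻¹ * Md q) *ᵥ grad (fun y => Hd q y) p ∧
    -grad (fun x => H x p) q + G *ᵥ u
      = -((Md q * (M q)⁻¹) *ᵥ grad (fun x => Hd x p) q)
        + (J₂ - G * Kv * Gᵀ) *ᵥ grad (fun y => Hd q y) p := by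
  have hgrad_p : grad (fun y => H q y) p = (M q)⁻¹ *ᵥ p := by
    subst hH
    exact grad_half_dotProduct_mulVec_add_const
      (isHermitian_iff_isSymm.mp (hMpd q).inv.isHermitian) _ p
  have hgrad_d_p : grad (fun y => Hd q y) p = (Md q)⁻¹ *ᵥ p := by
    subst hHd
    exact grad_half_dotProduct_mulVec_add_const
      (isHermitian_iff_isSymm.mp (hMdpd q).inv.isHermitian) _ p
  refine ⟨?_, ?_⟩
  · rw [hgrad_p, hgrad_d_p, mulVec_mulVec, Matrix.mul_assoc,
      mul_nonsing_inv _ ((isUnit_iff_isUnit_det _).mp (hMdpd q).isUnit), Matrix.mul_one]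
  set s := grad (fun x => H x p) q - (Md q * (M q)⁻¹) *ᵥ grad (fun x => Hd x p) q
    + J₂ *ᵥ ((Md q)⁻¹ *ᵥ p)
  have hcorank : G.rank + 1 = Fintype.card (Fin n) := by
    obtain ⟨i, -⟩ := Function.ne_iff.mp hw
    have := i.pos
    rw [hG, hm, Fintype.card_fin]
    omega
  have hs_range : s ∈ LinearMap.range G.mulVecLin := by
    rw [range_mulVecLin_eq_ker_dotProduct hw hannih hcorank]
    exact hmatch
  have hGu_es : G *ᵥ u_es = s := hu_es ▸
    mulVec_inv_transpose_mul_self_mulVec_transpose_of_mem_range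
      (isUnit_transpose_mul_self_of_rank_eq_card (by rw [hG, Fintype.card_fin])) hs_range
  rw [hu, hu_di, mulVec_add, hGu_es, hgrad_d_p, mulVec_neg, sub_mulVec]
  simp only [s, ← mulVec_mulVec]
  abel

/-- Pointwise algebraic identity behind IDA-PBC for underactuated mechanical systems
with one degree of underactuation. -/
theorem IDA_PBC_closed_loop {n m : ℕ} (hn : 2 ≤ n) (hm : m = n - 1)
    (q p : Fin n → ℝ)
    (M Md : (Fin n → ℝ) → Matrix (Fin n) (Fin n) ℝ)
    (hMdiff : ∀ i j, Differentiable ℝ (fun x => M x i j))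
    (hMddiff : ∀ i j, Differentiable ℝ (fun x => Md x i j))
    (hMpd : ∀ x, (M x).PosDef) (hMdpd : ∀ x, (Md x).PosDef)
    (V Vd : (Fin n → ℝ) → ℝ) (hV : Differentiable ℝ V) (hVd : Differentiable ℝ Vd)
    (H Hd : (Fin n → ℝ) → (Fin n → ℝ) → ℝ)
    (hH : H = fun x y => (1 / 2 : ℝ) * (y ⬝ᵥ ((M x)⁻¹ *ᵥ y)) + V x)
    (hHd : Hd = fun x y => (1 / 2 : ℝ) * (y ⬝ᵥ ((Md x)⁻¹ *ᵥ y)) + Vd x)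
    (G : Matrix (Fin n) (Fin m) ℝ) (hG : G.rank = m)
    (w : Fin n → ℝ) (hw : w ≠ 0) (hannih : Gᵀ *ᵥ w = 0)
    (J₂ : Matrix (Fin n) (Fin n) ℝ) (Kv : Matrix (Fin m) (Fin m) ℝ)
    (hmatch : w ⬝ᵥ (grad (fun x => H x p) q
        - (Md q * (M q)⁻¹) *ᵥ grad (fun x => Hd x p) q
        + J₂ *ᵥ ((Md q)⁻¹ *ᵥ p)) = 0)
    (u_es u_di u : Fin m → ℝ)
    (hu_es : u_es = (Gᵀ * G)⁻¹ *ᵥ (Gᵀ *ᵥ (grad (fun x => H x p) q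
        - (Md q * (M q)⁻¹) *ᵥ grad (fun x => Hd x p) q
        + J₂ *ᵥ ((Md q)⁻¹ *ᵥ p))))
    (hu_di : u_di = -(Kv *ᵥ (Gᵀ *ᵥ grad (fun y => Hd q y) p)))
    (hu : u = u_es + u_di) :
    grad (fun y => H q y) p = ((M q)⁻¹ * Md q) *ᵥ grad (fun y => Hd q y) p ∧
    -grad (fun x => H x p) q + G *ᵥ u
      = -((Md q * (M q)⁻¹) *ᵥ grad (fun x => Hd x p) q)
        + (J₂ - G * Kv * Gᵀ) *ᵥ grad (fun y => Hd q y) p :=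
  IDA_PBC_closed_loop_general hm q p M Md hMpd hMdpd V Vd H Hd hH hHd G hG w hw hannih J₂ Kv hmatch
    u_es u_di u hu_es hu_di hu
end

section
/- Consider the VTOL aircraft with configuration q = (x, y, θ) ∈ ℝ³, inertia matrix M = I₃, potential energy V(q) = g·y with g > 0, and ε > 0. Let q* = (x*, y*, 0). Then there is no twice continuously differentiable function V_d : ℝ³ → ℝ satisfying all of: (i) the potential-energy matching PDE with M_d = I₃, namely cos θ · ∂V_d/∂x + sin θ · ∂V_d/∂y − ε · ∂V_d/∂θ = g sin θ for all (x, y, θ); (ii) ∇V_d(q*) = 0; (iii) the Hessian matrix of V_d at q* is positive definite. -/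
/-!
Differentiating the matching equation at `q* = (x*, y*, 0)` in the `x` and `θ` directions gives
`V_xx = ε V_xθ` and `V_θx + V_y - ε V_θθ = g`, where `V_y(q*) = 0`. Hence the principal
`{x, θ}` minor `V_xx V_θθ - V_xθ²` of the Hessian equals `-g V_xθ = -g V_xx / ε`, so it cannot be
positive together with `V_xx`, as positive definiteness would require.
-/

open Matrix

open Real
open scoped ComplexOrder

theorem Matrix.PosDef.apply_mul_apply_lt_mul_diag {n 𝕜 : Type*} [Fintype n] [RCLike 𝕜]
    {A : Matrix n n 𝕜} (hA : A.PosDef) {i j : n} (hij : i ≠ j) :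
    A i j * A j i < A i i * A j j := by
  have hinj : Function.Injective ![i, j] := by
    intro a b
    fin_cases a <;> fin_cases b <;> simp [hij, hij.symm]
  classical
  have hdet := (hA.submatrix hinj).det_pos
  rwa [det_fin_two, sub_pos] at hdet

theorem hasDerivAt_grad_add_smul_single {n : ℕ} {f : (Fin n → ℝ) → ℝ} (hf : ContDiff ℝ 2 f)
    (q : Fin n → ℝ) (d i : Fin n) :
    HasDerivAt (fun t : ℝ => grad f (q + t • Pi.single d 1) i) (hess f q d i) 0 := by
  have hline : HasDerivAt (fun t : ℝ => q + t • Pi.single d (1 : ℝ)) (Pi.single d 1) 0 := by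
    simpa using ((hasDerivAt_id (0 : ℝ)).smul_const (Pi.single d (1 : ℝ))).const_add q
  have hpartial : Differentiable ℝ (fun x => fderiv ℝ f x (Pi.single i 1)) :=
    ((hf.fderiv_right le_rfl).differentiable one_ne_zero).clm_apply (differentiable_const _)
  exact (hpartial q).hasFDerivAt.comp_hasDerivAt_of_eq 0 hline (by simp)

/-- The potential-energy matching equation `G^⊥ (∇V - M_d M⁻¹ ∇V_d) = 0` of the VTOL aircraft
with `M_d = M = I₃`, `V = g y` and `G^⊥ = (cos θ, sin θ, -ε)`. -/
def VTOLMatching (g ε : ℝ) (V : (Fin 3 → ℝ) → ℝ) : Prop :=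
  ∀ q : Fin 3 → ℝ,
    cos (q 2) * grad V q 0 + sin (q 2) * grad V q 1 - ε * grad V q 2 = g * sin (q 2)

namespace VTOLMatching

variable {g ε : ℝ} {V : (Fin 3 → ℝ) → ℝ}

theorem hess_zero_zero_eq (hV : ContDiff ℝ 2 V) (hm : VTOLMatching g ε V) {q : Fin 3 → ℝ}
    (hq : q 2 = 0) : hess V q 0 0 = ε * hess V q 0 2 := by
  have hflat : ∀ t : ℝ,
      grad V (q + t • Pi.single 0 1) 0 - ε * grad V (q + t • Pi.single 0 1) 2 = 0 := by
    intro t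
    have h := hm (q + t • Pi.single 0 1)
    simp only [Pi.add_apply, Pi.smul_apply, ne_eq, Fin.reduceEq, not_false_eq_true,
      Pi.single_eq_of_ne, smul_zero, add_zero, hq, cos_zero, sin_zero] at h
    linarith
  have hderiv :=
    (hasDerivAt_grad_add_smul_single hV q 0 0).sub
      ((hasDerivAt_grad_add_smul_single hV q 0 2).const_mul ε)
  have := hderiv.unique ((funext hflat).symm ▸ hasDerivAt_const (0 : ℝ) (0 : ℝ))
  linarith

theorem hess_two_zero_add_grad_sub_eq (hV : ContDiff ℝ 2 V) (hm : VTOLMatching g ε V)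
    {q : Fin 3 → ℝ} (hq : q 2 = 0) : hess V q 2 0 + grad V q 1 - ε * hess V q 2 2 = g := by
  have hθ : ∀ t : ℝ, (q + t • Pi.single 2 1 : Fin 3 → ℝ) 2 = t := by simp [hq]
  have hmatch : ∀ t : ℝ, cos t * grad V (q + t • Pi.single 2 1) 0
      + sin t * grad V (q + t • Pi.single 2 1) 1 - ε * grad V (q + t • Pi.single 2 1) 2
      = g * sin t := fun t => by
    have h := hm (q + t • Pi.single 2 1)
    rwa [hθ] at h
  have hderiv := (((hasDerivAt_cos 0).mul (hasDerivAt_grad_add_smul_single hV q 2 0)).add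
    ((hasDerivAt_sin 0).mul (hasDerivAt_grad_add_smul_single hV q 2 1))).sub
    ((hasDerivAt_grad_add_smul_single hV q 2 2).const_mul ε)
  have := hderiv.unique ((funext hmatch).symm ▸ (hasDerivAt_sin 0).const_mul g)
  simpa using this

end VTOLMatching

/-- The VTOL aircraft cannot be stabilized by potential-energy shaping alone
(`M_d = I₃` violates the necessary condition of Proposition 1). -/
theorem VTOL_no_potential_shaping (g ε : ℝ) (hg : 0 < g) (hε : 0 < ε) (xs ys : ℝ) :
    ¬ ∃ Vd : (Fin 3 → ℝ) → ℝ, ContDiff ℝ 2 Vd ∧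
      (∀ q : Fin 3 → ℝ,
        Real.cos (q 2) * grad Vd q 0 + Real.sin (q 2) * grad Vd q 1
          - ε * grad Vd q 2 = g * Real.sin (q 2)) ∧
      grad Vd ![xs, ys, 0] = 0 ∧
      (hess Vd ![xs, ys, 0]).PosDef := by
  rintro ⟨V, hV, hm, hgrad, hpos⟩
  set H := hess V ![xs, ys, 0]
  have hsymm : H 2 0 = H 0 2 := by simpa using hpos.isHermitian.apply 0 2
  have hxx : H 0 0 = ε * H 0 2 := VTOLMatching.hess_zero_zero_eq hV hm rfl
  have hθθ : H 2 0 + grad V ![xs, ys, 0] 1 - ε * H 2 2 = g :=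
    VTOLMatching.hess_two_zero_add_grad_sub_eq hV hm rfl
  rw [hgrad, Pi.zero_apply, add_zero, hsymm] at hθθ
  have hxθ : 0 < H 0 2 := pos_of_mul_pos_right (hxx ▸ hpos.diag_pos) hε.le
  have hminor : H 0 0 * H 2 2 - H 0 2 * H 2 0 = -(g * H 0 2) := by
    rw [hsymm, hxx]
    linear_combination (-H 0 2) * hθθ
  linarith [hpos.apply_mul_apply_lt_mul_diag (i := 0) (j := 2) (by decide), mul_pos hg hxθ]
end

section
/- Let m, M, l₃ be positive real numbers and set c = m·l₃/(M + m). Let φ : ℝ² → ℝ be differentiable and define a : ℝ³ → ℝ by a(x, y, θ) = φ( x + c·sin θ, y − c·cos θ ). Then a is differentiable and satisfies the first-order linear PDE −m l₃ cos θ · ∂a/∂x − m l₃ sin θ · ∂a/∂y + (M + m) · ∂a/∂θ = 0 for all (x, y, θ) ∈ ℝ³. -/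
/-!
The left-hand side of the PDE is the derivative of `a = φ ∘ g` along the characteristic field
`V = (-m l₃ cos θ, -m l₃ sin θ, M + m)`, where `g = (x + c sin θ, y - c cos θ)`. Because
`(M + m) c = m l₃`, the derivative of `g` kills `V`, so by the chain rule the derivative of `a`
along `V` vanishes.
-/

open Real ContinuousLinearMap

theorem fderiv_apply_eq_sum_mul_grad {n : ℕ} (f : (Fin n → ℝ) → ℝ) (q v : Fin n → ℝ) :
    fderiv ℝ f q v = ∑ i, v i * grad f q i := by
  conv_lhs => rw [← Finset.univ_sum_single v]
  simp only [map_sum, grad]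
  refine Finset.sum_congr rfl fun i _ => ?_
  rw [← smul_eq_mul, ← map_smul, ← Pi.single_smul, smul_eq_mul, mul_one]

theorem fderiv_comp_apply_eq_zero {E F : Type*} [NormedAddCommGroup E] [NormedSpace ℝ E]
    [NormedAddCommGroup F] [NormedSpace ℝ F] {φ : F → ℝ} {g : E → F} {q v : E}
    (hφ : DifferentiableAt ℝ φ (g q)) (hg : DifferentiableAt ℝ g q)
    (hv : fderiv ℝ g q v = 0) : fderiv ℝ (φ ∘ g) q v = 0 := by
  rw [fderiv_comp q hφ hg, comp_apply, hv, map_zero]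

noncomputable def spiderCraneFirstIntegrals (c : ℝ) (q : Fin 3 → ℝ) : ℝ × ℝ :=
  (q 0 + c * sin (q 2), q 1 - c * cos (q 2))

theorem hasFDerivAt_spiderCraneFirstIntegrals (c : ℝ) (q : Fin 3 → ℝ) :
    HasFDerivAt (spiderCraneFirstIntegrals c)
      (ContinuousLinearMap.prod (proj 0 + (c * cos (q 2)) • proj 2 : (Fin 3 → ℝ) →L[ℝ] ℝ)
        (proj 1 + (c * sin (q 2)) • proj 2)) q := by
  have hθ := hasFDerivAt_apply (𝕜 := ℝ) 2 q
  have hx := (hasFDerivAt_apply 0 q).add (((hasDerivAt_sin _).comp_hasFDerivAt q hθ).const_mul c)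
  have hy := (hasFDerivAt_apply 1 q).sub (((hasDerivAt_cos _).comp_hasFDerivAt q hθ).const_mul c)
  refine (hx.prodMk hy).congr_fderiv ?_
  ext v <;> simp <;> ring

theorem differentiable_spiderCraneFirstIntegrals (c : ℝ) :
    Differentiable ℝ (spiderCraneFirstIntegrals c) :=
  fun q => (hasFDerivAt_spiderCraneFirstIntegrals c q).differentiableAt

theorem fderiv_spiderCraneFirstIntegrals_apply (c : ℝ) (q v : Fin 3 → ℝ) :
    fderiv ℝ (spiderCraneFirstIntegrals c) q v
      = (v 0 + c * cos (q 2) * v 2, v 1 + c * sin (q 2) * v 2) := by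
  simp [(hasFDerivAt_spiderCraneFirstIntegrals c q).fderiv]

theorem fderiv_spiderCraneFirstIntegrals_characteristic {c k μ : ℝ} (hc : μ * c = k)
    (q : Fin 3 → ℝ) :
    fderiv ℝ (spiderCraneFirstIntegrals c) q ![-(k * cos (q 2)), -(k * sin (q 2)), μ] = 0 := by
  rw [fderiv_spiderCraneFirstIntegrals_apply, ← hc]
  ext <;> simp <;> ring

theorem spiderCrane_kinetic_PDE_solution_general (m M l₃ : ℝ)
    (hm : 0 < m) (hM : 0 < M)
    (c : ℝ) (hc : c = m * l₃ / (M + m))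
    (φ : ℝ × ℝ → ℝ) (hφ : Differentiable ℝ φ)
    (a : (Fin 3 → ℝ) → ℝ)
    (ha : a = fun q => φ (q 0 + c * Real.sin (q 2), q 1 - c * Real.cos (q 2))) :
    Differentiable ℝ a ∧
    ∀ q : Fin 3 → ℝ,
      -(m * l₃ * Real.cos (q 2)) * grad a q 0
        - m * l₃ * Real.sin (q 2) * grad a q 1
        + (M + m) * grad a q 2 = 0 := by
  replace ha : a = φ ∘ spiderCraneFirstIntegrals c := ha
  have hMm : M + m ≠ 0 := by positivity
  have hcM : (M + m) * c = m * l₃ := by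
    rw [hc]
    field_simp
  refine ⟨ha ▸ hφ.comp (differentiable_spiderCraneFirstIntegrals c), fun q => ?_⟩
  have hV := fderiv_comp_apply_eq_zero (hφ _) (differentiable_spiderCraneFirstIntegrals c q)
    (fderiv_spiderCraneFirstIntegrals_characteristic hcM q)
  rw [← ha, fderiv_apply_eq_sum_mul_grad, Fin.sum_univ_three] at hV
  simp only [Matrix.cons_val] at hV
  linear_combination hV

/-- The Pfaffian/characteristic solution of the remaining kinetic-energy matching PDE
for the 2D SpiderCrane system. -/
theorem spiderCrane_kinetic_PDE_solution (m M l₃ : ℝ)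
    (hm : 0 < m) (hM : 0 < M) (hl : 0 < l₃)
    (c : ℝ) (hc : c = m * l₃ / (M + m))
    (φ : ℝ × ℝ → ℝ) (hφ : Differentiable ℝ φ)
    (a : (Fin 3 → ℝ) → ℝ)
    (ha : a = fun q => φ (q 0 + c * Real.sin (q 2), q 1 - c * Real.cos (q 2))) :
    Differentiable ℝ a ∧
    ∀ q : Fin 3 → ℝ,
      -(m * l₃ * Real.cos (q 2)) * grad a q 0
        - m * l₃ * Real.sin (q 2) * grad a q 1
        + (M + m) * grad a q 2 = 0 :=
  spiderCrane_kinetic_PDE_solution_general m M l₃ hm hM c hc φ hφ a ha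
end

section
/- Let φ : ℝ → ℝ be differentiable and define V_d : ℝ × (−π/2, π/2) → ℝ by V_d(q₁, q₂) = φ( −(8/9)·ln( (1 + sin q₂)/cos q₂ ) + q₂/3 − q₁ ). Then V_d satisfies the homogeneous first-order PDE (4 − 1.5 cos q₂) · ∂V_d/∂q₁ − 4.5 cos q₂ · ∂V_d/∂q₂ = 0 for all q₁ ∈ ℝ and q₂ ∈ (−π/2, π/2). -/
/-!
Along the characteristics of the operator `a ∂₁ + b ∂₂` the quantity `ψ(q₂) - q₁` is constant as
soon as `b ψ' = -a`, so `φ(ψ(q₂) - q₁)` is annihilated by it for every differentiable `φ`. Here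
`ψ(q₂) = -(8/9) log(sec q₂ + tan q₂) + q₂/3`, whose derivative is `-(8/9) sec q₂ + 1/3`, and
`-4.5 cos q₂ · ψ'(q₂) = 4 - 1.5 cos q₂`.
-/

open Real

theorem hasDerivAt_log_one_add_sin_div_cos {x : ℝ} (hx : 0 < cos x) :
    HasDerivAt (fun y => log ((1 + sin y) / cos y)) (1 / cos x) x := by
  have hsin : 0 < 1 + sin x := by
    nlinarith [sin_sq_add_cos_sq x, neg_one_le_sin x]
  have hquot : HasDerivAt (fun y => (1 + sin y) / cos y)
      ((cos x * cos x - (1 + sin x) * -sin x) / cos x ^ 2) x :=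
    ((hasDerivAt_sin x).const_add 1).div (hasDerivAt_cos x) hx.ne'
  convert hquot.log (div_pos hsin hx).ne' using 1
  field_simp
  linear_combination -sin_sq_add_cos_sq x

theorem deriv_comp_sub_combination {φ ψ : ℝ → ℝ} {ψ' x y : ℝ}
    (hφ : DifferentiableAt ℝ φ (ψ y - x)) (hψ : HasDerivAt ψ ψ' y) (a b : ℝ) :
    a * deriv (fun x => φ (ψ y - x)) x - b * deriv (fun y => φ (ψ y - x)) y
      = -(a + b * ψ') * deriv φ (ψ y - x) := by
  have h₁ : HasDerivAt (fun x => φ (ψ y - x)) (deriv φ (ψ y - x) * -1) x :=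
    hφ.hasDerivAt.comp x ((hasDerivAt_id x).const_sub _)
  have h₂ : HasDerivAt (fun y => φ (ψ y - x)) (deriv φ (ψ y - x) * ψ') y :=
    hφ.hasDerivAt.comp y (hψ.sub_const x)
  rw [h₁.deriv, h₂.deriv]
  ring

/-- Homogeneous solution of the potential-energy matching PDE (54) for the pendubot. -/
theorem pendubot_homogeneous_solution (φ : ℝ → ℝ) (hφ : Differentiable ℝ φ)
    (Vd : ℝ → ℝ → ℝ)
    (hVd : Vd = fun q₁ q₂ =>
      φ (-(8 / 9) * Real.log ((1 + Real.sin q₂) / Real.cos q₂) + q₂ / 3 - q₁)) :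
    ∀ q₁ q₂ : ℝ, q₂ ∈ Set.Ioo (-(π / 2)) (π / 2) →
      (4 - 1.5 * Real.cos q₂) * deriv (fun x => Vd x q₂) q₁
        - 4.5 * Real.cos q₂ * deriv (fun y => Vd q₁ y) q₂ = 0 := by
  subst hVd
  intro q₁ q₂ hq₂
  have hcos : 0 < cos q₂ := cos_pos_of_mem_Ioo hq₂
  have hψ : HasDerivAt (fun y => -(8 / 9) * log ((1 + sin y) / cos y) + y / 3)
      (-(8 / 9) * (1 / cos q₂) + 1 / 3) q₂ :=
    ((hasDerivAt_log_one_add_sin_div_cos hcos).const_mul _).add ((hasDerivAt_id q₂).div_const 3)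
  rw [deriv_comp_sub_combination (hφ _) hψ]
  field_simp
  ring
end
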